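/- arXiv:2207.08504 — 3 statements merged into one kernel-verified Lean document; each statement's English description precedes it below -/
import Mathlib

section
/- Let C be a cocomplete category and S a class of morphisms of C that contains all identities, consists of epimorphisms, and is closed under composition and under pushout along arbitrary morphisms. Then for every object a, the full subcategory of the under-category C_{a/} spanned by the morphisms a → a' belonging to S is a filtered category. -/
/-!
Since every `a ⟶ X` in `S` is epi, there is at most one morphism between two objects of
the subcategory, so it is thin and only common targets are needed.  For `X` and `Y`, the
pushout of `a ⟶ X` and `a ⟶ Y` is one: `a ⟶ X ⟶ X ⊔_a Y` lies in `S` by cobase change and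
composition.
-/

open CategoryTheory CategoryTheory.Limits

theorem CategoryTheory.IsFiltered.of_isThin {J : Type*} [Category J] [Quiver.IsThin J]
    [Nonempty J] (h : ∀ X Y : J, ∃ Z, Nonempty (X ⟶ Z) ∧ Nonempty (Y ⟶ Z)) :
    IsFiltered J where
  cocone_objs X Y := by
    obtain ⟨Z, ⟨f⟩, ⟨g⟩⟩ := h X Y
    exact ⟨Z, f, g, trivial⟩
  cocone_maps _ Y u v := ⟨Y, 𝟙 Y, by rw [Subsingleton.elim u v]⟩

theorem CategoryTheory.Under.subsingleton_hom_of_epi {C : Type*} [Category C] {a : C}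
    (X Y : Under a) [Epi X.hom] : Subsingleton (X ⟶ Y) :=
  ⟨fun u v => Under.UnderMorphism.ext <|
    (cancel_epi X.hom).mp <| (Under.w u).trans (Under.w v).symm⟩

section

variable {C : Type*} [Category C] (S : MorphismProperty C) (a : C)

theorem CategoryTheory.Under.isThin_fullSubcategory_of_epi
    (hepi : ∀ ⦃x y : C⦄ (f : x ⟶ y), S f → Epi f) :
    Quiver.IsThin (ObjectProperty.FullSubcategory (fun f : Under a => S f.hom)) := fun X Y =>
  have := hepi _ X.property
  have := subsingleton_hom_of_epi X.obj Y.obj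
  ⟨fun _ _ => ObjectProperty.hom_ext _ (Subsingleton.elim _ _)⟩

theorem CategoryTheory.Under.exists_common_target_fullSubcategory [HasPushouts C]
    [S.IsStableUnderComposition] [S.IsStableUnderCobaseChange]
    (X Y : ObjectProperty.FullSubcategory (fun f : Under a => S f.hom)) :
    ∃ Z : ObjectProperty.FullSubcategory (fun f : Under a => S f.hom),
      Nonempty (X ⟶ Z) ∧ Nonempty (Y ⟶ Z) := by
  have hZ : S (X.obj.hom ≫ pushout.inl X.obj.hom Y.obj.hom) :=
    S.comp_mem _ _ X.property (S.pushout_inl X.obj.hom Y.obj.hom Y.property)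
  refine ⟨⟨Under.mk (X.obj.hom ≫ pushout.inl X.obj.hom Y.obj.hom), hZ⟩,
    ⟨ObjectProperty.homMk (Under.homMk (pushout.inl X.obj.hom Y.obj.hom) rfl)⟩,
    ⟨ObjectProperty.homMk (Under.homMk (pushout.inr X.obj.hom Y.obj.hom) ?_)⟩⟩
  simpa using pushout.condition.symm

end

/-- Let `C` be a cocomplete category and `S` a class of morphisms containing all
identities, consisting of epimorphisms, closed under composition and under pushout
along arbitrary morphisms.  Then for every object `a`, the full subcategory of the
under category `C_{a/}` spanned by the morphisms `a ⟶ a'` belonging to `S` is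
filtered. -/
theorem stmt0 {C : Type*} [Category C] [HasColimits C]
    (S : MorphismProperty C)
    [S.ContainsIdentities] [S.IsStableUnderComposition] [S.IsStableUnderCobaseChange]
    (hepi : ∀ ⦃x y : C⦄ (f : x ⟶ y), S f → Epi f)
    (a : C) :
    IsFiltered (ObjectProperty.FullSubcategory (fun f : Under a => S f.hom)) :=
  have := Under.isThin_fullSubcategory_of_epi S a hepi
  have : Nonempty (ObjectProperty.FullSubcategory (fun f : Under a => S f.hom)) :=
    ⟨⟨Under.mk (𝟙 a), S.id_mem a⟩⟩
  IsFiltered.of_isThin (Under.exists_common_target_fullSubcategory S a)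
end

section
/- Let C be a cocomplete category and S a class of epimorphisms of C containing all identities, closed under composition, under pushouts, and under filtered colimits (i.e., the transfinite/filtered colimit of a filtered diagram of S-morphisms under a is again in S), and suppose that for each object a the full subcategory of C_{a/} spanned by S-morphisms is essentially small. Then for every object a there exists a morphism r_a : a → Ra in S such that Ra has the right lifting property against every morphism of S. -/
/-!
Since `S` consists of epimorphisms, the `S`-morphisms under `a` form a preorder, which pushouts
make directed. Its colimit `r : a ⟶ Ra` lies in `S`, and every `S`-morphism `g : a ⟶ P` maps to
it under `a`: `g ≫ m = r` for some `m`. Given `f ∈ S` and `u : x ⟶ Ra`, the pushout leg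
`inr : Ra ⟶ P` of `f` along `u` is in `S`; applying this to `r ≫ inr` gives `m` with
`inr ≫ m = 𝟙 Ra`, as `r` is epi, and `inl ≫ m` is the lift.
-/

open CategoryTheory CategoryTheory.Limits

universe v u

namespace CategoryTheory

lemma Under.hom_comp_colimit_ι_eq_of_isPreconnected {C : Type u} [Category.{v} C] {a : C}
    {J : Type*} [Category J] [IsPreconnected J] (F : J ⥤ Under a)
    [HasColimit (F ⋙ Under.forget a)] (j j' : J) :
    (F.obj j).hom ≫ colimit.ι (F ⋙ Under.forget a) j =
      (F.obj j').hom ≫ colimit.ι (F ⋙ Under.forget a) j' :=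
  constant_of_preserves_morphisms (fun j => (F.obj j).hom ≫ colimit.ι (F ⋙ Under.forget a) j)
    (fun _ _ f => by
      rw [← Under.w (F.map f)]
      exact (congrArg _ (colimit.w (F ⋙ Under.forget a) f).symm).trans (Category.assoc _ _ _).symm)
    j j'

abbrev MorphismProperty.FullUnder {C : Type u} [Category.{v} C] (S : MorphismProperty C) (a : C) :
    Type (max u v) :=
  ObjectProperty.FullSubcategory (fun f : CategoryTheory.Under a => S f.hom)

variable {C : Type u} [Category.{v} C] {S : MorphismProperty C}

lemma subsingleton_hom_fullUnder (hepi : ∀ ⦃x y : C⦄ (f : x ⟶ y), S f → Epi f) {a : C}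
    (d d' : S.FullUnder a) : Subsingleton (d ⟶ d') := by
  have := hepi _ d.property
  refine ⟨fun f g => ObjectProperty.hom_ext _ (Under.UnderMorphism.ext ?_)⟩
  rw [← cancel_epi d.obj.hom, Under.w f.hom, Under.w g.hom]

lemma isFiltered_fullUnder [HasPushouts C] [S.ContainsIdentities] [S.IsStableUnderComposition]
    [S.IsStableUnderCobaseChange] (hepi : ∀ ⦃x y : C⦄ (f : x ⟶ y), S f → Epi f) (a : C) :
    IsFiltered (S.FullUnder a) :=
  have := subsingleton_hom_fullUnder hepi (a := a)
  { cocone_objs := fun d d' =>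
      ⟨⟨Under.mk (d.obj.hom ≫ pushout.inl d.obj.hom d'.obj.hom),
          S.comp_mem _ _ d.property (S.pushout_inl _ _ d'.property)⟩,
        ObjectProperty.homMk (Under.homMk (pushout.inl _ _) rfl),
        ObjectProperty.homMk (Under.homMk (pushout.inr _ _) pushout.condition.symm), trivial⟩
    cocone_maps := fun _ d' _ _ => ⟨d', 𝟙 d', Subsingleton.elim _ _⟩
    nonempty := ⟨⟨Under.mk (𝟙 a), S.id_mem a⟩⟩ }

lemma exists_weaklyTerminal_fullUnder [HasColimits C] [S.ContainsIdentities]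
    [S.IsStableUnderComposition] [S.IsStableUnderCobaseChange]
    (hepi : ∀ ⦃x y : C⦄ (f : x ⟶ y), S f → Epi f) (a : C)
    (hfiltered : ∀ (J : Type v) [SmallCategory J] [IsFiltered J] (F : J ⥤ Under a),
      (∀ j : J, S (F.obj j).hom) → ∀ j : J, S ((F.obj j).hom ≫ colimit.ι (F ⋙ Under.forget a) j))
    [EssentiallySmall.{v} (S.FullUnder a)] :
    ∃ (R : C) (r : a ⟶ R), S r ∧ ∀ ⦃P : C⦄ (g : a ⟶ P), S g → ∃ m : P ⟶ R, g ≫ m = r := by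
  have := isFiltered_fullUnder hepi a
  let e := equivSmallModel.{v} (S.FullUnder a)
  have : IsFiltered (SmallModel.{v} (S.FullUnder a)) := IsFiltered.of_equivalence e
  have := IsFiltered.isConnected (SmallModel.{v} (S.FullUnder a))
  let F := e.inverse ⋙ ObjectProperty.ι _
  let j₀ := e.functor.obj ⟨Under.mk (𝟙 a), S.id_mem a⟩
  refine ⟨_, (F.obj j₀).hom ≫ colimit.ι (F ⋙ Under.forget a) j₀,
    hfiltered _ F (fun j => (e.inverse.obj j).property) j₀, fun P g hg => ?_⟩
  let d : S.FullUnder a := ⟨Under.mk g, hg⟩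
  refine ⟨(e.unit.app d).hom.right ≫ colimit.ι (F ⋙ Under.forget a) (e.functor.obj d), ?_⟩
  rw [← Under.hom_comp_colimit_ι_eq_of_isPreconnected F (e.functor.obj d) j₀]
  exact (Category.assoc _ _ _).symm.trans (congrArg (· ≫ _) (Under.w (e.unit.app d).hom))

lemma exists_lift_of_forall_exists_comp_eq [HasPushouts C] [S.IsStableUnderComposition]
    [S.IsStableUnderCobaseChange] {a R : C} {r : a ⟶ R} [Epi r] (hr : S r)
    (hR : ∀ ⦃P : C⦄ (g : a ⟶ P), S g → ∃ m : P ⟶ R, g ≫ m = r)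
    ⦃x y : C⦄ (f : x ⟶ y) (hf : S f) (u : x ⟶ R) : ∃ v : y ⟶ R, f ≫ v = u := by
  obtain ⟨m, hm⟩ := hR (r ≫ pushout.inr f u) (S.comp_mem _ _ hr (S.pushout_inr f u hf))
  have hretraction : pushout.inr f u ≫ m = 𝟙 R := by
    rw [← cancel_epi r, Category.comp_id, ← Category.assoc, hm]
  exact ⟨pushout.inl f u ≫ m,
    by rw [← Category.assoc, pushout.condition, Category.assoc, hretraction, Category.comp_id]⟩

end CategoryTheory

/-- Let `C` be a cocomplete category and `S` a class of epimorphisms containing the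
identities, closed under composition, under pushouts and under filtered colimits
(the colimit of a filtered diagram of `S`-morphisms under `a` is again an
`S`-morphism under `a`), such that for each object `a` the full subcategory of
`C_{a/}` spanned by the `S`-morphisms is essentially small.  Then for every object
`a` there is a morphism `r_a : a ⟶ Ra` in `S` such that `Ra` has the right lifting
property against every morphism of `S`. -/
theorem stmt3 {C : Type u} [Category.{v} C] [HasColimits C]
    (S : MorphismProperty C)
    [S.ContainsIdentities] [S.IsStableUnderComposition] [S.IsStableUnderCobaseChange]
    (hepi : ∀ ⦃x y : C⦄ (f : x ⟶ y), S f → Epi f)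
    (hfiltered : ∀ (a : C) (J : Type v) [SmallCategory J] [IsFiltered J]
      (F : J ⥤ Under a), (∀ j : J, S (F.obj j).hom) →
        ∀ j : J, S ((F.obj j).hom ≫ colimit.ι (F ⋙ Under.forget a) j))
    (hsmall : ∀ a : C, EssentiallySmall.{v} (ObjectProperty.FullSubcategory (fun f : Under a => S f.hom)))
    (a : C) :
    ∃ (Ra : C) (r : a ⟶ Ra), S r ∧
      ∀ ⦃x y : C⦄ (f : x ⟶ y), S f → ∀ u : x ⟶ Ra, ∃ v : y ⟶ Ra, f ≫ v = u := by
  have := hsmall a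
  obtain ⟨Ra, r, hr, hfactor⟩ := exists_weaklyTerminal_fullUnder hepi a (hfiltered a)
  have := hepi r hr
  exact ⟨Ra, r, hr, exists_lift_of_forall_exists_comp_eq hr hfactor⟩
end

section
/- With the hypotheses of the previous construction, the object Ra is essentially unique: if b is any object admitting a morphism t : a → b in S and having the right lifting property against all morphisms of S, then b is isomorphic to Ra under a. -/
open CategoryTheory CategoryTheory.Limits

universe v u

def CategoryTheory.Iso.ofEpiOfFactors {C : Type u} [Category.{v} C] {a x y : C}
    {r : a ⟶ x} {t : a ⟶ y} [Epi r] [Epi t] (f : x ⟶ y) (g : y ⟶ x)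
    (hf : r ≫ f = t) (hg : t ≫ g = r) : x ≅ y where
  hom := f
  inv := g
  hom_inv_id := by rw [← cancel_epi r, ← Category.assoc, hf, hg, Category.comp_id]
  inv_hom_id := by rw [← cancel_epi t, ← Category.assoc, hg, hf, Category.comp_id]

theorem stmt4_general {C : Type u} [Category.{v} C]
    (S : MorphismProperty C)
    (hepi : ∀ ⦃x y : C⦄ (f : x ⟶ y), S f → Epi f)
    {a Ra b : C} (r : a ⟶ Ra) (t : a ⟶ b)
    (hr : S r)
    (hRa : ∀ ⦃x y : C⦄ (f : x ⟶ y), S f → ∀ u : x ⟶ Ra, ∃ v : y ⟶ Ra, f ≫ v = u)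
    (ht : S t)
    (hb : ∀ ⦃x y : C⦄ (f : x ⟶ y), S f → ∀ u : x ⟶ b, ∃ v : y ⟶ b, f ≫ v = u) :
    ∃ e : Ra ≅ b, r ≫ e.hom = t := by
  obtain ⟨f, hf⟩ := hb r hr t
  obtain ⟨g, hg⟩ := hRa t ht r
  have := hepi r hr
  have := hepi t ht
  exact ⟨Iso.ofEpiOfFactors f g hf hg, hf⟩

/-- Uniqueness of the completion `Ra`: if `r : a ⟶ Ra` is an `S`-morphism whose target
has the right lifting property against all `S`-morphisms, and `t : a ⟶ b` is another
`S`-morphism whose target has the right lifting property against all `S`-morphisms,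
then `b` is isomorphic to `Ra` under `a`. -/
theorem stmt4 {C : Type u} [Category.{v} C] [HasColimits C]
    (S : MorphismProperty C)
    [S.ContainsIdentities] [S.IsStableUnderComposition] [S.IsStableUnderCobaseChange]
    (hepi : ∀ ⦃x y : C⦄ (f : x ⟶ y), S f → Epi f)
    (hfiltered : ∀ (a : C) (J : Type v) [SmallCategory J] [IsFiltered J]
      (F : J ⥤ Under a), (∀ j : J, S (F.obj j).hom) →
        ∀ j : J, S ((F.obj j).hom ≫ colimit.ι (F ⋙ Under.forget a) j))
    (hsmall : ∀ a : C, EssentiallySmall.{v} (ObjectProperty.FullSubcategory (fun f : Under a => S f.hom)))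
    {a Ra b : C} (r : a ⟶ Ra) (t : a ⟶ b)
    (hr : S r)
    (hRa : ∀ ⦃x y : C⦄ (f : x ⟶ y), S f → ∀ u : x ⟶ Ra, ∃ v : y ⟶ Ra, f ≫ v = u)
    (ht : S t)
    (hb : ∀ ⦃x y : C⦄ (f : x ⟶ y), S f → ∀ u : x ⟶ b, ∃ v : y ⟶ b, f ≫ v = u) :
    ∃ e : Ra ≅ b, r ≫ e.hom = t :=
  stmt4_general S hepi r t hr hRa ht hb
end
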